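/- Let G be a finite edge-weighted graph with weights in the natural numbers, let v be a node of G, let N be a nonempty set of nodes of G with v ∉ N, and let ω ∈ ℕ. Suppose that the edges of G incident to v with other endpoint in N are exactly the edges (v, u) for all u ∈ N, each of weight ω; let G₀ be the graph G with these edges removed. Suppose further that every two distinct nodes of N are adjacent in G₀ by an edge of weight at least ω, and let S be a maximum-weight spanning forest of G₀. Then there exists a maximum-weight spanning forest S' of G such that S' \ S ⊆ {(v, u) : u ∈ N} and the symmetric difference of S and S' contains at most 2 edges. -/

import Mathlib

/-!
Spanning forests of finite edge-weighted graphs.  A weight function is given on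
unordered pairs, `w : Sym2 α → ℕ`.
-/

variable {α : Type*} [Fintype α]

/-- The weight of a graph `S` w.r.t. the edge-weight function `w`:
the sum of the weights of its edges. -/
noncomputable def gweight (S : SimpleGraph α) (w : Sym2 α → ℕ) : ℕ :=
  ∑ p ∈ (Set.toFinite S.edgeSet).toFinset, w p

/-- `S` is a spanning forest of `G`: an acyclic subgraph with the same connected
components (in particular it contains all nodes of `G`). -/
def IsSpanningForest (G S : SimpleGraph α) : Prop :=
  S ≤ G ∧ S.IsAcyclic ∧ ∀ a b, S.Reachable a b ↔ G.Reachable a b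

/-- `S` is a maximum-weight spanning forest of `G` w.r.t. the weights `w`. -/
def IsMaxSpanningForest (G S : SimpleGraph α) (w : Sym2 α → ℕ) : Prop :=
  IsSpanningForest G S ∧ ∀ S', IsSpanningForest G S' → gweight S' w ≤ gweight S w

/-!
Exchange argument.  Among the maximum-weight spanning forests `T` of `G`, take one with
the fewest edges from `v` into `N`.  It has at most one: if it had `vu₁` and `vu₂`, trading
`vu₂` for the clique edge `u₁u₂`, of weight at least `ω`, would give another maximum forest
with fewer.  So `T` leaves `G₀` in at most one edge `e = vu`.  If in none, `T` is a forest of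
`G₀`, and `S` is already maximum in `G`.  If `v` and `u` are not connected in `G₀`, then
`S + e` is maximum.  Otherwise the `S`-path from `v` to `u` crosses the cut of `T - e` in an
edge `f`; the forest `T - e + f` of `G₀` weighs at most `S`, which rearranges to
`w(T) ≤ w(S - f + e)`.
-/

open SimpleGraph

namespace SimpleGraph

variable {V : Type*} {H H' : SimpleGraph V} {a b x y : V}

theorem reachable_sup_edge_iff :
    (H ⊔ edge x y).Reachable a b ↔ H.Reachable a b ∨
      (H.Reachable a x ∧ H.Reachable y b) ∨ (H.Reachable a y ∧ H.Reachable x b) := by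
  constructor
  · rintro ⟨p⟩
    induction p with
    | nil => exact .inl .rfl
    | @cons c d b hcd p ih =>
      rcases (sup_adj ..).mp hcd with hcd | hcd
      · exact ih.imp hcd.reachable.trans
          (Or.imp (And.imp_left hcd.reachable.trans) (And.imp_left hcd.reachable.trans))
      · obtain ⟨rfl, rfl⟩ | ⟨rfl, rfl⟩ := ((edge_adj ..).mp hcd).1
        · rcases ih with h | ⟨-, h⟩ | ⟨-, h⟩
          · exact .inr (.inl ⟨.rfl, h⟩)
          · exact .inr (.inl ⟨.rfl, h⟩)
          · exact .inl h
        · rcases ih with h | ⟨-, h⟩ | ⟨-, h⟩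
          · exact .inr (.inr ⟨.rfl, h⟩)
          · exact .inl h
          · exact .inr (.inr ⟨.rfl, h⟩)
  · have hxy : (H ⊔ edge x y).Reachable x y := by
      obtain rfl | hne := eq_or_ne x y
      · rfl
      · exact (le_sup_right (a := H) ((edge_adj ..).mpr ⟨.inl ⟨rfl, rfl⟩, hne⟩)).reachable
    have hH : ∀ {c d}, H.Reachable c d → (H ⊔ edge x y).Reachable c d :=
      (·.mono le_sup_left)
    rintro (h | ⟨h₁, h₂⟩ | ⟨h₁, h₂⟩)
    · exact hH h
    · exact ((hH h₁).trans hxy).trans (hH h₂)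
    · exact ((hH h₁).trans hxy.symm).trans (hH h₂)

theorem reachable_sup_edge_mono (h : H.Reachable ≤ H'.Reachable) :
    (H ⊔ edge x y).Reachable ≤ (H' ⊔ edge x y).Reachable := by
  intro c d
  simp only [reachable_sup_edge_iff]
  exact Or.imp (h c d) (Or.imp (And.imp (h c x) (h y d)) (And.imp (h c y) (h x d)))

theorem reachable_sup_edge_eq_of_reachable (hxy : H.Reachable x y) :
    (H ⊔ edge x y).Reachable = H.Reachable := by
  ext c d
  rw [reachable_sup_edge_iff]
  refine ⟨?_, .inl⟩
  rintro (h | ⟨h₁, h₂⟩ | ⟨h₁, h₂⟩)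
  · exact h
  · exact (h₁.trans hxy).trans h₂
  · exact (h₁.trans hxy.symm).trans h₂

theorem le_deleteEdges_sup_edge (H : SimpleGraph V) (x y : V) :
    H ≤ H.deleteEdges {s(x, y)} ⊔ edge x y := by
  intro c d hcd
  by_cases h : s(c, d) = s(x, y)
  · refine Or.inr ((edge_adj ..).mpr ⟨?_, hcd.ne⟩)
    rw [Sym2.eq_iff] at h
    tauto
  · exact Or.inl (deleteEdges_adj.mpr ⟨hcd, h⟩)

theorem IsAcyclic.not_reachable_deleteEdges_of_mem_edges (hH : H.IsAcyclic) {p : H.Walk a b}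
    (hp : p.IsPath) {e : Sym2 V} (he : e ∈ p.edges) : ¬(H.deleteEdges {e}).Reachable a b := by
  classical
  rintro ⟨q⟩
  have hpq : p = _ := congrArg Subtype.val <|
    (hH.subsingleton_path a b).elim ⟨p, hp⟩ ⟨_, q.toPath.2.mapLe (deleteEdges_le {e})⟩
  rw [hpq, Walk.edges_mapLe_eq_edges] at he
  simpa using Walk.edges_subset_edgeSet _ he

theorem IsAcyclic.exists_adj_not_reachable (hH : H.IsAcyclic) (hab : H.Reachable a b)
    (hH' : ¬H'.Reachable a b) :
    ∃ x y, H.Adj x y ∧ ¬H'.Reachable x y ∧ ¬(H.deleteEdges {s(x, y)}).Reachable a b := by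
  classical
  obtain ⟨p, hp⟩ := hab.some.toPath
  obtain ⟨d, hd, hx, hy⟩ := p.exists_boundary_dart {z | H'.Reachable a z} .rfl hH'
  refine ⟨d.fst, d.snd, d.adj, fun h => hy (hx.trans h), ?_⟩
  exact hH.not_reachable_deleteEdges_of_mem_edges hp
    (p.edges_eq_map_darts ▸ List.mem_map_of_mem hd)

end SimpleGraph

section SpanningForest

variable {V : Type*} {G H T : SimpleGraph V} {a b x y : V}

theorem IsSpanningForest.exchange (hT : IsSpanningForest G T) (hxy : G.Adj x y)
    (hnr : ¬(T.deleteEdges {s(a, b)}).Reachable x y) :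
    IsSpanningForest G (T.deleteEdges {s(a, b)} ⊔ edge x y) := by
  obtain ⟨hTG, hTac, hTr⟩ := hT
  set T' := T.deleteEdges {s(a, b)} ⊔ edge x y
  have hle : T' ≤ G := sup_le ((deleteEdges_le _).trans hTG) ((edge_le_iff _).mpr (.inr hxy))
  have hT'ab : T'.Reachable a b := by
    have hT'xy : T'.Reachable x y := reachable_sup_edge_iff.mpr (.inr (.inl ⟨.rfl, .rfl⟩))
    have hmono : ∀ {c d}, (T.deleteEdges {s(a, b)}).Reachable c d → T'.Reachable c d :=
      (·.mono le_sup_left)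
    have hTxy := ((hTr x y).mpr hxy.reachable).mono (T.le_deleteEdges_sup_edge a b)
    rcases reachable_sup_edge_iff.mp hTxy with h | ⟨hxa, hby⟩ | ⟨hxb, hay⟩
    · exact absurd h hnr
    · exact ((hmono hxa).symm.trans hT'xy).trans (hmono hby).symm
    · exact (hmono hay).trans (hT'xy.symm.trans (hmono hxb))
  refine ⟨hle, (hTac.anti (deleteEdges_le _)).sup_edge_of_not_reachable hnr,
    fun c d => ⟨(·.mono hle), fun h => ?_⟩⟩
  rw [← reachable_sup_edge_eq_of_reachable hT'ab]
  exact ((hTr c d).mpr h).mono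
    ((T.le_deleteEdges_sup_edge a b).trans (sup_le_sup_right le_sup_left _))

theorem IsSpanningForest.reachable_le_sup_edge (hT : IsSpanningForest G T)
    (hTH : T.deleteEdges {s(a, b)} ≤ H) : G.Reachable ≤ (H ⊔ edge a b).Reachable :=
  fun c d h => ((hT.2.2 c d).mpr h).mono
    ((T.le_deleteEdges_sup_edge a b).trans (sup_le_sup_right hTH _))

end SpanningForest

section MaxSpanningForest

variable {G G₀ H S T : SimpleGraph α} {w : Sym2 α → ℕ} {a b x y : α}

theorem gweight_mono (h : H ≤ T) (w : Sym2 α → ℕ) : gweight H w ≤ gweight T w :=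
  Finset.sum_le_sum_of_subset <| (Set.Finite.toFinset_subset_toFinset ..).mpr (edgeSet_mono h)

theorem gweight_eq_add_of_edgeSet_eq_insert {e : Sym2 α} (h : T.edgeSet = insert e H.edgeSet)
    (he : e ∉ H.edgeSet) (w : Sym2 α → ℕ) : gweight T w = w e + gweight H w := by
  classical
  unfold gweight
  simp_rw [h, Set.Finite.toFinset_insert]
  exact Finset.sum_insert (by simpa using he)

theorem gweight_deleteEdges {e : Sym2 α} (he : e ∈ T.edgeSet) (w : Sym2 α → ℕ) :
    gweight T w = w e + gweight (T.deleteEdges {e}) w :=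
  gweight_eq_add_of_edgeSet_eq_insert (by simp [he]) (by simp) w

theorem gweight_sup_edge (hxy : x ≠ y) (h : ¬H.Adj x y) (w : Sym2 α → ℕ) :
    gweight (H ⊔ edge x y) w = w s(x, y) + gweight H w :=
  gweight_eq_add_of_edgeSet_eq_insert
    (by simp [edgeSet_sup, edgeSet_edge_of_ne hxy, Set.union_comm]) h w

theorem gweight_exchange {e : Sym2 α} (he : e ∈ T.edgeSet)
    (hxy : ¬(T.deleteEdges {e}).Reachable x y) (w : Sym2 α → ℕ) :
    gweight (T.deleteEdges {e} ⊔ edge x y) w + w e = gweight T w + w s(x, y) := by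
  rw [gweight_sup_edge (by rintro rfl; exact hxy .rfl) (fun h => hxy h.reachable),
    gweight_deleteEdges he]
  ring

theorem exists_isMaxSpanningForest (G : SimpleGraph α) (w : Sym2 α → ℕ) :
    ∃ T, IsMaxSpanningForest G T w := by
  obtain ⟨F, hFG, hF, hFr⟩ := G.exists_isAcyclic_reachable_eq_le
  obtain ⟨T, hT, hmax⟩ := Set.exists_max_image {T | IsSpanningForest G T} (gweight · w)
    (Set.toFinite _) ⟨F, hFG, hF, by simp [hFr]⟩
  exact ⟨T, hT, hmax⟩

theorem IsMaxSpanningForest.of_gweight_le (hT : IsMaxSpanningForest G T w)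
    (hS : IsSpanningForest G S) (h : gweight T w ≤ gweight S w) : IsMaxSpanningForest G S w :=
  ⟨hS, fun _ hS' => (hT.2 _ hS').trans h⟩

theorem IsMaxSpanningForest.gweight_le_of_isAcyclic (hS : IsMaxSpanningForest G S w)
    (hHG : H ≤ G) (hH : H.IsAcyclic) : gweight H w ≤ gweight S w := by
  obtain ⟨F, hHF, hFG, hF, hFr⟩ := G.exists_isAcyclic_reachable_eq_le_of_le_of_isAcyclic hHG hH
  exact (gweight_mono hHF w).trans (hS.2 F ⟨hFG, hF, by simp [hFr]⟩)

theorem IsMaxSpanningForest.exchange (hT : IsMaxSpanningForest G T w) (hab : T.Adj a b)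
    (hxy : G.Adj x y) (hnr : ¬(T.deleteEdges {s(a, b)}).Reachable x y)
    (hw : w s(a, b) ≤ w s(x, y)) :
    IsMaxSpanningForest G (T.deleteEdges {s(a, b)} ⊔ edge x y) w :=
  hT.of_gweight_le (hT.1.exchange hxy hnr) (by have := gweight_exchange hab hnr w; omega)

theorem IsMaxSpanningForest.of_le (hG₀ : G₀ ≤ G) (hS : IsMaxSpanningForest G₀ S w)
    (hT : IsMaxSpanningForest G T w) (hTG₀ : T ≤ G₀) : IsMaxSpanningForest G S w := by
  refine hT.of_gweight_le
    ⟨hS.1.1.trans hG₀, hS.1.2.1, fun c d => ⟨fun h => ?_, fun h => ?_⟩⟩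
    (hS.gweight_le_of_isAcyclic hTG₀ hT.1.2.1)
  · exact ((hS.1.2.2 c d).mp h).mono hG₀
  · exact (hS.1.2.2 c d).mpr (((hT.1.2.2 c d).mpr h).mono hTG₀)

theorem IsMaxSpanningForest.sup_edge_of_not_reachable (hG₀ : G₀ ≤ G)
    (hS : IsMaxSpanningForest G₀ S w) (hT : IsMaxSpanningForest G T w) (hab : T.Adj a b)
    (hTG₀ : T.deleteEdges {s(a, b)} ≤ G₀) (hnr : ¬G₀.Reachable a b) :
    IsMaxSpanningForest G (S ⊔ edge a b) w := by
  obtain ⟨hSG₀, hSac, hSr⟩ := hS.1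
  have hSnr : ¬S.Reachable a b := fun h => hnr ((hSr a b).mp h)
  have hle : S ⊔ edge a b ≤ G :=
    sup_le (hSG₀.trans hG₀) ((edge_le_iff _).mpr (.inr (hT.1.1 hab)))
  refine hT.of_gweight_le ⟨hle, hSac.sup_edge_of_not_reachable hSnr,
    fun c d => ⟨(·.mono hle), fun h => ?_⟩⟩ ?_
  · exact reachable_sup_edge_mono (fun c d => (hSr c d).mpr) c d
      (hT.1.reachable_le_sup_edge hTG₀ c d h)
  · rw [gweight_deleteEdges (e := s(a, b)) hab,
      gweight_sup_edge hab.ne (fun h => hSnr h.reachable)]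
    exact Nat.add_le_add_left
      (hS.gweight_le_of_isAcyclic hTG₀ (hT.1.2.1.anti (deleteEdges_le _))) _

theorem IsMaxSpanningForest.exists_exchange_of_reachable (hG₀ : G₀ ≤ G)
    (hS : IsMaxSpanningForest G₀ S w) (hT : IsMaxSpanningForest G T w) (hab : T.Adj a b)
    (hTG₀ : T.deleteEdges {s(a, b)} ≤ G₀) (hr : G₀.Reachable a b) :
    ∃ f, IsMaxSpanningForest G (S.deleteEdges {f} ⊔ edge a b) w := by
  obtain ⟨hSG₀, hSac, hSr⟩ := hS.1
  have hSG : IsSpanningForest G S := by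
    refine ⟨hSG₀.trans hG₀, hSac,
      fun c d => ⟨fun h => ((hSr c d).mp h).mono hG₀, fun h => ?_⟩⟩
    rw [hSr, ← reachable_sup_edge_eq_of_reachable hr]
    exact hT.1.reachable_le_sup_edge hTG₀ c d h
  have hTnr : ¬(T.deleteEdges {s(a, b)}).Reachable a b :=
    isBridge_iff.mp (isAcyclic_iff_forall_adj_isBridge.mp hT.1.2.1 hab)
  obtain ⟨x, y, hxy, hTxy, hSab⟩ := hSac.exists_adj_not_reachable ((hSr a b).mpr hr) hTnr
  refine ⟨s(x, y), hT.of_gweight_le (hSG.exchange (hT.1.1 hab) hSab) ?_⟩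
  have hT' : gweight (T.deleteEdges {s(a, b)} ⊔ edge x y) w ≤ gweight S w :=
    hS.gweight_le_of_isAcyclic (sup_le hTG₀ ((edge_le_iff _).mpr (.inr (hSG₀ hxy))))
      ((hT.1.2.1.anti (deleteEdges_le _)).sup_edge_of_not_reachable hTxy)
  have := gweight_exchange (e := s(a, b)) hab hTxy w
  have := gweight_exchange (e := s(x, y)) hxy hSab w
  omega

theorem IsMaxSpanningForest.exists_of_subsingleton_sdiff (hG₀ : G₀ ≤ G)
    (hS : IsMaxSpanningForest G₀ S w) (hT : IsMaxSpanningForest G T w)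
    (hTG₀ : (T.edgeSet \ G₀.edgeSet).Subsingleton) :
    ∃ S', IsMaxSpanningForest G S' w ∧ S'.edgeSet \ S.edgeSet ⊆ T.edgeSet \ G₀.edgeSet ∧
      (S.edgeSet \ S'.edgeSet).Subsingleton := by
  rcases hTG₀.eq_empty_or_singleton with h | ⟨e, he⟩
  · refine ⟨S, hS.of_le hG₀ hT ?_, by simp, by simp⟩
    rw [← edgeSet_subset_edgeSet]
    exact Set.sdiff_eq_empty.mp h
  induction e with | h a b => ?_
  have hab : T.Adj a b := (he.symm.subset rfl).1
  have hTG₀ : T.deleteEdges {s(a, b)} ≤ G₀ := by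
    rw [← edgeSet_subset_edgeSet, edgeSet_deleteEdges, ← he]
    exact fun p hp => by_contra fun hp' => hp.2 ⟨hp.1, hp'⟩
  have hnew : ∀ H ≤ S, (H ⊔ edge a b).edgeSet \ S.edgeSet ⊆ T.edgeSet \ G₀.edgeSet := by
    intro H hHS p ⟨hp, hpS⟩
    rw [edgeSet_sup] at hp
    rcases hp with hp | hp
    · exact absurd (edgeSet_mono hHS hp) hpS
    · exact he ▸ edgeSet_edge_subset hp
  by_cases hr : G₀.Reachable a b
  · obtain ⟨f, hf⟩ := hS.exists_exchange_of_reachable hG₀ hT hab hTG₀ hr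
    refine ⟨_, hf, hnew _ (deleteEdges_le _), (Set.subsingleton_singleton (a := f)).anti ?_⟩
    intro p ⟨hpS, hp⟩
    by_contra hpf
    exact hp (edgeSet_mono le_sup_left (by rw [edgeSet_deleteEdges]; exact ⟨hpS, hpf⟩))
  · refine ⟨_, hS.sup_edge_of_not_reachable hG₀ hT hab hTG₀ hr, hnew _ le_rfl, ?_⟩
    rw [Set.sdiff_eq_empty.mpr (edgeSet_mono le_sup_left)]
    exact Set.subsingleton_empty

theorem exists_isMaxSpanningForest_subsingleton_star (G : SimpleGraph α) (w : Sym2 α → ℕ)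
    {v : α} {N : Set α} (hv : v ∉ N)
    (hN : ∀ u ∈ N, ∀ u' ∈ N, u ≠ u' → G.Adj u u' ∧ w s(v, u') ≤ w s(u, u')) :
    ∃ T, IsMaxSpanningForest G T w ∧
      (T.edgeSet ∩ {p | ∃ u ∈ N, p = s(v, u)}).Subsingleton := by
  set star := {p : Sym2 α | ∃ u ∈ N, p = s(v, u)}
  obtain ⟨T, hT, hmin⟩ := Set.exists_min_image {T | IsMaxSpanningForest G T w}
    (fun T => (T.edgeSet ∩ star).ncard) (Set.toFinite _) (exists_isMaxSpanningForest G w)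
  refine ⟨T, hT, ?_⟩
  rintro _ ⟨h₁, u₁, hu₁, rfl⟩ _ ⟨h₂, u₂, hu₂, rfl⟩
  by_contra hne
  obtain ⟨hadj, hw⟩ := hN u₁ hu₁ u₂ hu₂ (by rintro rfl; exact hne rfl)
  have hnr : ¬(T.deleteEdges {s(v, u₂)}).Reachable u₁ u₂ := fun h =>
    isBridge_iff.mp (isAcyclic_iff_forall_adj_isBridge.mp hT.1.2.1 h₂)
      ((deleteEdges_adj.mpr ⟨h₁, hne⟩).reachable.trans h)
  have hsub : (T.deleteEdges {s(v, u₂)} ⊔ edge u₁ u₂).edgeSet ∩ star ⊆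
      (T.edgeSet ∩ star) \ {s(v, u₂)} := by
    rintro p ⟨hp, hpstar⟩
    rw [edgeSet_sup, edgeSet_deleteEdges] at hp
    rcases hp with hp | hp
    · exact ⟨⟨hp.1, hpstar⟩, hp.2⟩
    · obtain ⟨u, hu, rfl⟩ := hpstar
      refine absurd ?_ hv
      exact (Sym2.eq_iff.mp (edgeSet_edge_subset hp)).elim (fun h => h.1 ▸ hu₁)
        (fun h => h.1 ▸ hu₂)
  exact (hmin _ (hT.exchange h₂ hadj hnr hw)).not_gt <| Set.ncard_lt_ncard <|
    hsub.trans_ssubset (Set.sdiff_singleton_ssubset.mpr ⟨h₂, u₂, hu₂, rfl⟩)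

end MaxSpanningForest

theorem exists_maxSpanningForest_small_diff_general (G : SimpleGraph α) (w : Sym2 α → ℕ)
    (v : α) (N : Set α) (hv : v ∉ N) (ω : ℕ)
    (hEdges : ∀ u ∈ N, G.Adj v u ∧ w s(v, u) = ω)
    (G₀ : SimpleGraph α)
    (hG₀ : G₀ = G.deleteEdges {p : Sym2 α | ∃ u ∈ N, p = s(v, u)})
    (hClique : ∀ u ∈ N, ∀ u' ∈ N, u ≠ u' → G₀.Adj u u' ∧ ω ≤ w s(u, u'))
    (S : SimpleGraph α) (hS : IsMaxSpanningForest G₀ S w) :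
    ∃ S', IsMaxSpanningForest G S' w ∧
      S'.edgeSet \ S.edgeSet ⊆ {p : Sym2 α | ∃ u ∈ N, p = s(v, u)} ∧
      ((S.edgeSet \ S'.edgeSet) ∪ (S'.edgeSet \ S.edgeSet)).ncard ≤ 2 := by
  have hG₀G : G₀ ≤ G := hG₀ ▸ G.deleteEdges_le _
  obtain ⟨T, hT, hTstar⟩ := exists_isMaxSpanningForest_subsingleton_star G w hv
    fun u hu u' hu' hne => ⟨hG₀G (hClique u hu u' hu' hne).1,
      (hEdges u' hu').2.trans_le (hClique u hu u' hu' hne).2⟩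
  have hTG₀ :
      T.edgeSet \ G₀.edgeSet = T.edgeSet ∩ {p : Sym2 α | ∃ u ∈ N, p = s(v, u)} := by
    rw [hG₀, edgeSet_deleteEdges, Set.sdiff_sdiff_right,
      Set.sdiff_eq_empty.mpr (edgeSet_mono hT.1.1), Set.empty_union]
  rw [← hTG₀] at hTstar
  obtain ⟨S', hS', hnew, hold⟩ := hS.exists_of_subsingleton_sdiff hG₀G hT hTstar
  refine ⟨S', hS', hnew.trans (hTG₀ ▸ Set.inter_subset_right), ?_⟩
  calc _ ≤ (S.edgeSet \ S'.edgeSet).ncard + (S'.edgeSet \ S.edgeSet).ncard :=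
        Set.ncard_union_le _ _
    _ ≤ 1 + 1 := add_le_add (Set.ncard_le_one_iff_subsingleton.mpr hold)
      (Set.ncard_le_one_iff_subsingleton.mpr (hTstar.anti hnew))

/-- Let the edges of `G` from `v` into the nonempty set `N` be exactly the pairs
`(v, u)`, `u ∈ N`, each of weight `ω`; let `G₀` be `G` without these edges, in which
`N` is a clique whose edges have weight at least `ω`.  If `S` is a maximum-weight
spanning forest of `G₀`, then there is a maximum-weight spanning forest `S'` of `G`
whose new edges all go from `v` into `N` and which differs from `S` in at most two
edges. -/
theorem exists_maxSpanningForest_small_diff (G : SimpleGraph α) (w : Sym2 α → ℕ)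
    (v : α) (N : Set α) (hN : N.Nonempty) (hv : v ∉ N) (ω : ℕ)
    (hEdges : ∀ u ∈ N, G.Adj v u ∧ w s(v, u) = ω)
    (G₀ : SimpleGraph α)
    (hG₀ : G₀ = G.deleteEdges {p : Sym2 α | ∃ u ∈ N, p = s(v, u)})
    (hClique : ∀ u ∈ N, ∀ u' ∈ N, u ≠ u' → G₀.Adj u u' ∧ ω ≤ w s(u, u'))
    (S : SimpleGraph α) (hS : IsMaxSpanningForest G₀ S w) :
    ∃ S', IsMaxSpanningForest G S' w ∧
      S'.edgeSet \ S.edgeSet ⊆ {p : Sym2 α | ∃ u ∈ N, p = s(v, u)} ∧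
      ((S.edgeSet \ S'.edgeSet) ∪ (S'.edgeSet \ S.edgeSet)).ncard ≤ 2 :=
  exists_maxSpanningForest_small_diff_general G w v N hv ω hEdges G₀ hG₀ hClique S hS
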